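/- Let N be a positive integer, s ≥ 1 an integer, and W : ℤ → ℤ/Nℤ an s-periodic bi-infinite word, i.e. W(i + s) = W(i) for all i ∈ ℤ. Then there exists a positive integer t such that for every integer l ≥ 1 and every i ∈ ℤ, the subword W(i) W(i+1) … W(i + l·t·s − 2) of length l·t·s − 1 lies in Ā. -/

import Mathlib

/-- The monoid homomorphism π sending a word α₁…α_l over ℤ/Nℤ to the matrix product
[[0,1],[−1,α₁]] ⋯ [[0,1],[−1,α_l]]. -/
def piWordN (N : ℕ) (w : List (ZMod N)) : Matrix (Fin 2) (Fin 2) (ZMod N) :=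
  (w.map fun α => !![0, 1; -1, α]).prod

/-- Ā : the words whose image under π has (2,2)-entry equal to 0. -/
def Abar (N : ℕ) : Set (List (ZMod N)) :=
  {w | piWordN N w 1 1 = 0}

/-!
Over one period the letter matrices multiply to some `P`, an element of the finite group of units
of the matrix ring, so `P ^ t = 1` for `t` the order of that group. A window of length `l t s`
therefore has `π = 1`, and dropping its last letter `α` leaves `π = [[0,1],[-1,α]]⁻¹ = [[α,-1],[1,0]]`,
whose `(2,2)`-entry vanishes.
-/

theorem List.prod_map_range_mul_eq_pow {M : Type*} [Monoid M] {g : ℕ → M} {s : ℕ}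
    (hg : Function.Periodic g s) (k : ℕ) :
    ((List.range (k * s)).map g).prod = ((List.range s).map g).prod ^ k := by
  induction k with
  | zero => simp
  | succ k ih =>
    have hshift : g ∘ (k * s + ·) = g := funext fun j => by
      simpa [add_comm] using hg.nat_mul k j
    rw [add_mul, one_mul, List.range_add, List.map_append, List.prod_append, ih, List.map_map,
      hshift, pow_succ]

theorem piWordN_append_singleton (N : ℕ) (w : List (ZMod N)) (α : ZMod N) :
    piWordN N (w ++ [α]) = piWordN N w * !![0, 1; -1, α] := by
  simp [piWordN]

theorem mem_Abar_of_piWordN_append_singleton_eq_one {N : ℕ} {w : List (ZMod N)} {α : ZMod N}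
    (h : piWordN N (w ++ [α]) = 1) : w ∈ Abar N := by
  have hinv : (!![0, 1; -1, α] * !![α, -1; 1, 0] : Matrix (Fin 2) (Fin 2) (ZMod N)) = 1 := by
    ext i j; fin_cases i <;> fin_cases j <;> simp
  have hw : piWordN N w = !![α, -1; 1, 0] := by
    rw [← one_mul !![α, -1; 1, 0], ← h, piWordN_append_singleton, mul_assoc, hinv, mul_one]
  simp [Abar, hw]

theorem isUnit_piWordN (N : ℕ) (w : List (ZMod N)) : IsUnit (piWordN N w) := by
  refine List.prod_isUnit fun m hm => ?_
  obtain ⟨α, -, rfl⟩ := List.mem_map.mp hm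
  exact (Matrix.isUnit_iff_isUnit_det _).mpr (by simp [Matrix.det_fin_two])

theorem piWordN_pow_card_units (N : ℕ) [NeZero N] (w : List (ZMod N)) :
    piWordN N w ^ Fintype.card (Matrix (Fin 2) (Fin 2) (ZMod N))ˣ = 1 := by
  obtain ⟨U, hU⟩ := isUnit_piWordN N w
  rw [← hU, ← Units.val_pow_eq_pow_val, pow_card_eq_one, Units.val_one]

theorem piWordN_map_range_mul_eq_pow (N : ℕ) {f : ℕ → ZMod N} {s : ℕ}
    (hf : Function.Periodic f s) (k : ℕ) :
    piWordN N ((List.range (k * s)).map f) = piWordN N ((List.range s).map f) ^ k := by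
  simp only [piWordN, List.map_map]
  exact List.prod_map_range_mul_eq_pow (fun j => by simp [hf j]) k

theorem stmt19 (N : ℕ) (hN : 0 < N) (s : ℕ) (hs : 1 ≤ s)
    (W : ℤ → ZMod N) (hper : ∀ i : ℤ, W (i + s) = W i) :
    ∃ t : ℕ, 0 < t ∧ ∀ l : ℕ, 1 ≤ l → ∀ i : ℤ,
      ((List.range (l * t * s - 1)).map fun j => W (i + j)) ∈ Abar N := by
  have : NeZero N := ⟨hN.ne'⟩
  set t := Fintype.card (Matrix (Fin 2) (Fin 2) (ZMod N))ˣ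
  refine ⟨t, Fintype.card_pos, fun l hl i => ?_⟩
  -- the index list `List.range _ : List ℕ` is coerced to `List ℤ` through the list monad
  simp only [bind_pure_comp, List.map_eq_map, List.map_map, Function.comp_def]
  have hW : Function.Periodic (fun j : ℕ => W (i + j)) s := fun j => by
    simpa [add_assoc] using hper (i + j)
  obtain ⟨n, hn⟩ : ∃ n, l * t * s = n + 1 :=
    Nat.exists_eq_succ_of_ne_zero (Nat.mul_pos (Nat.mul_pos hl Fintype.card_pos) hs).ne'
  refine mem_Abar_of_piWordN_append_singleton_eq_one (α := W (i + n)) ?_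
  have hsplit : (List.range n).map (fun j : ℕ => W (i + j)) ++ [W (i + n)]
      = (List.range (l * t * s)).map fun j : ℕ => W (i + j) := by
    simp [hn, List.range_succ]
  rw [hn, Nat.add_sub_cancel, hsplit, piWordN_map_range_mul_eq_pow N hW, mul_comm l t,
    pow_mul, piWordN_pow_card_units, one_pow]
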